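/- arXiv:1410.7213 — 2 statements merged into one kernel-verified Lean document; each statement's English description precedes it below -/
import Mathlib

section
/- For n ≥ 6, ex(n;T_n*) = (n−1)(n−2)/2, and the unique extremal graph is K_{n−1} ∪ K_1. -/
open SimpleGraph Finset

/-- `G` contains a copy of `H` as a subgraph: there is an injective map
preserving adjacency. -/
def ContainsCopy {V : Type*} {W : Type*} (G : SimpleGraph V) (H : SimpleGraph W) : Prop :=
  ∃ f : W ↪ V, ∀ a b, H.Adj a b → G.Adj (f a) (f b)

/-- `exNum p H` is the maximal number of edges in a simple graph of order `p`
not containing a copy of `H`. -/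
noncomputable def exNum (p : ℕ) {W : Type*} (H : SimpleGraph W) : ℕ :=
  sSup {m : ℕ | ∃ G : SimpleGraph (Fin p), ¬ ContainsCopy G H ∧ Nat.card G.edgeSet = m}

/-- `exNum2 p H₁ H₂` is the maximal number of edges in a simple graph of order `p`
containing no copy of `H₁` and no copy of `H₂`. -/
noncomputable def exNum2 (p : ℕ) {W₁ W₂ : Type*} (H₁ : SimpleGraph W₁) (H₂ : SimpleGraph W₂) : ℕ :=
  sSup {m : ℕ | ∃ G : SimpleGraph (Fin p),
    ¬ ContainsCopy G H₁ ∧ ¬ ContainsCopy G H₂ ∧ Nat.card G.edgeSet = m}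

/-- The tree `T_n` on vertices `v_0, …, v_{n-1}` with edges
`v_0v_1, …, v_0v_{n-2}` and `v_{n-2}v_{n-1}`: the unique tree on `n` vertices
of maximal degree `n-2`. -/
def Tn (n : ℕ) : SimpleGraph (Fin n) :=
  SimpleGraph.fromRel (fun a b =>
    (a.val = 0 ∧ 1 ≤ b.val ∧ b.val ≤ n - 2) ∨ (a.val = n - 2 ∧ b.val = n - 1))

/-- The tree `T_n^*` on vertices `v_0, …, v_{n-1}` with edges
`v_0v_1, …, v_0v_{n-3}`, `v_{n-3}v_{n-2}` and `v_{n-2}v_{n-1}`. -/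
def TnStar (n : ℕ) : SimpleGraph (Fin n) :=
  SimpleGraph.fromRel (fun a b =>
    (a.val = 0 ∧ 1 ≤ b.val ∧ b.val ≤ n - 3) ∨ (a.val = n - 3 ∧ b.val = n - 2) ∨
    (a.val = n - 2 ∧ b.val = n - 1))




lemma swapStep {α : Type*} [DecidableEq α] (σ : Equiv.Perm α) (i v : α) :
    ∃ τ : Equiv.Perm α, τ i = v ∧ ∀ j, σ j ≠ v → σ j ≠ σ i → τ j = σ j :=
  ⟨σ.trans (Equiv.swap (σ i) v), by simp, fun j h1 h2 => by
    simp [Equiv.swap_apply_of_ne_of_ne h2 h1]⟩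

lemma exists_perm_four {α : Type*} [DecidableEq α] (i0 i1 i2 i3 x y z w : α)
    (h01 : i0 ≠ i1) (h02 : i0 ≠ i2) (h03 : i0 ≠ i3) (h12 : i1 ≠ i2) (h13 : i1 ≠ i3)
    (h23 : i2 ≠ i3)
    (g01 : x ≠ y) (g02 : x ≠ z) (g03 : x ≠ w) (g12 : y ≠ z) (g13 : y ≠ w) (g23 : z ≠ w) :
    ∃ σ : Equiv.Perm α, σ i0 = x ∧ σ i1 = y ∧ σ i2 = z ∧ σ i3 = w := by
  obtain ⟨σ1, e1, p1⟩ := swapStep (Equiv.refl α) i0 x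
  obtain ⟨σ2, e2, p2⟩ := swapStep σ1 i1 y
  have f20 : σ2 i0 = x := by rw [p2 i0 (by rw [e1]; exact g01) (σ1.injective.ne h01), e1]
  obtain ⟨σ3, e3, p3⟩ := swapStep σ2 i2 z
  have f30 : σ3 i0 = x := by rw [p3 i0 (by rw [f20]; exact g02) (σ2.injective.ne h02), f20]
  have f31 : σ3 i1 = y := by rw [p3 i1 (by rw [e2]; exact g12) (σ2.injective.ne h12), e2]
  obtain ⟨σ4, e4, p4⟩ := swapStep σ3 i3 w
  refine ⟨σ4, ?_, ?_, ?_, e4⟩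
  · rw [p4 i0 (by rw [f30]; exact g03) (σ3.injective.ne h03), f30]
  · rw [p4 i1 (by rw [f31]; exact g13) (σ3.injective.ne h13), f31]
  · rw [p4 i2 (by rw [e3]; exact g23) (σ3.injective.ne h23), e3]

/-- The configuration equivalent to containing `TnStar n`. -/
def Cfg {n : ℕ} (G : SimpleGraph (Fin n)) : Prop :=
  ∃ x y z w : Fin n, x ≠ y ∧ x ≠ z ∧ x ≠ w ∧ y ≠ z ∧ y ≠ w ∧ z ≠ w ∧
    G.Adj y z ∧ G.Adj z w ∧ ∀ u, u ≠ x → u ≠ z → u ≠ w → G.Adj x u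

lemma containsCopy_iff {n : ℕ} (hn : 6 ≤ n) (G : SimpleGraph (Fin n)) :
    ContainsCopy G (TnStar n) ↔ Cfg G := by
  set i0 : Fin n := ⟨0, by omega⟩ with hi0
  set i1 : Fin n := ⟨n - 3, by omega⟩ with hi1
  set i2 : Fin n := ⟨n - 2, by omega⟩ with hi2
  set i3 : Fin n := ⟨n - 1, by omega⟩ with hi3
  have h01 : i0 ≠ i1 := Fin.ne_of_val_ne (by simp [hi0, hi1]; omega)
  have h02 : i0 ≠ i2 := Fin.ne_of_val_ne (by simp [hi0, hi2]; omega)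
  have h03 : i0 ≠ i3 := Fin.ne_of_val_ne (by simp [hi0, hi3]; omega)
  have h12 : i1 ≠ i2 := Fin.ne_of_val_ne (by simp [hi1, hi2]; omega)
  have h13 : i1 ≠ i3 := Fin.ne_of_val_ne (by simp [hi1, hi3]; omega)
  have h23 : i2 ≠ i3 := Fin.ne_of_val_ne (by simp [hi2, hi3]; omega)
  have hadj12 : (TnStar n).Adj i1 i2 := by
    rw [TnStar, fromRel_adj]
    exact ⟨h12, Or.inl (Or.inr (Or.inl ⟨rfl, rfl⟩))⟩
  have hadj23 : (TnStar n).Adj i2 i3 := by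
    rw [TnStar, fromRel_adj]
    exact ⟨h23, Or.inl (Or.inr (Or.inr ⟨rfl, rfl⟩))⟩
  have hadj0 : ∀ i : Fin n, i ≠ i0 → i ≠ i2 → i ≠ i3 → (TnStar n).Adj i0 i := by
    intro i hi' hi2' hi3'
    rw [TnStar, fromRel_adj]
    refine ⟨Ne.symm hi', Or.inl (Or.inl ⟨rfl, ?_, ?_⟩)⟩
    · rcases Nat.eq_or_lt_of_le (Nat.zero_le i.val) with h | h
      · exact absurd (Fin.ext h.symm) hi'
      · exact h
    · have := i.isLt
      have hv2 : i.val ≠ n - 2 := fun h => hi2' (Fin.ext h)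
      have hv3 : i.val ≠ n - 1 := fun h => hi3' (Fin.ext h)
      omega
  constructor
  · rintro ⟨f, hf⟩
    have hsurj : Function.Surjective f := Finite.surjective_of_injective f.injective
    refine ⟨f i0, f i1, f i2, f i3, f.injective.ne h01, f.injective.ne h02,
      f.injective.ne h03, f.injective.ne h12, f.injective.ne h13, f.injective.ne h23,
      hf _ _ hadj12, hf _ _ hadj23, ?_⟩
    intro u hu0 hu2 hu3
    obtain ⟨i, rfl⟩ := hsurj u
    exact hf _ _ (hadj0 i (fun h => hu0 (congrArg f h)) (fun h => hu2 (congrArg f h))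
      (fun h => hu3 (congrArg f h)))
  · rintro ⟨x, y, z, w, g01, g02, g03, g12, g13, g23, hyz, hzw, hall⟩
    obtain ⟨σ, s0, s1, s2, s3⟩ := exists_perm_four i0 i1 i2 i3 x y z w
      h01 h02 h03 h12 h13 h23 g01 g02 g03 g12 g13 g23
    refine ⟨σ.toEmbedding, ?_⟩
    have key : ∀ a b : Fin n,
        ((a.val = 0 ∧ 1 ≤ b.val ∧ b.val ≤ n - 3) ∨ (a.val = n - 3 ∧ b.val = n - 2) ∨
          (a.val = n - 2 ∧ b.val = n - 1)) → G.Adj (σ a) (σ b) := by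
      rintro a b (⟨ha, hb1, hb2⟩ | ⟨ha, hb⟩ | ⟨ha, hb⟩)
      · have ha' : a = i0 := Fin.ext ha
        subst ha'
        rw [s0]
        refine hall _ ?_ ?_ ?_
        · rw [← s0]; exact σ.injective.ne (Fin.ne_of_val_ne (by simp [hi0]; omega))
        · rw [← s2]; exact σ.injective.ne (Fin.ne_of_val_ne (by simp [hi2]; omega))
        · rw [← s3]; exact σ.injective.ne (Fin.ne_of_val_ne (by simp [hi3]; omega))
      · have ha' : a = i1 := Fin.ext ha
        have hb' : b = i2 := Fin.ext hb
        subst ha'; subst hb'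
        rw [s1, s2]; exact hyz
      · have ha' : a = i2 := Fin.ext ha
        have hb' : b = i3 := Fin.ext hb
        subst ha'; subst hb'
        rw [s2, s3]; exact hzw
    intro a b hab
    rw [TnStar, fromRel_adj] at hab
    rcases hab.2 with h | h
    · exact key a b h
    · exact (key b a h).symm



lemma deg_ge_of {n : ℕ} (H : SimpleGraph (Fin n)) [DecidableRel H.Adj] (z : Fin n)
    (s : Finset (Fin n)) (h : ∀ u, u ∉ s → H.Adj z u) : n - s.card ≤ H.degree z := by
  have hsub : univ \ s ⊆ H.neighborFinset z := by
    intro u hu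
    rw [mem_neighborFinset]
    exact h u (mem_sdiff.mp hu).2
  have := card_le_card hsub
  rw [card_sdiff_of_subset (subset_univ _), card_univ, Fintype.card_fin] at this
  exact this

lemma core {n : ℕ} (hn : 6 ≤ n) (H : SimpleGraph (Fin n)) [DecidableRel H.Adj]
    (hcfg : ∀ x y z w : Fin n, x ≠ y → x ≠ z → x ≠ w → y ≠ z → y ≠ w → z ≠ w →
      (∀ u, u ≠ x → u ≠ z → u ≠ w → ¬ H.Adj x u) → H.Adj y z ∨ H.Adj z w)
    (hE : H.edgeFinset.card ≤ n - 1) :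
    ∃ a : Fin n, ∀ u v : Fin n, H.Adj u v ↔ u ≠ v ∧ (u = a ∨ v = a) := by
  have hdeg : ∀ v, H.degree v = (H.neighborFinset v).card := fun _ => rfl
  have hsum : ∑ v, H.degree v ≤ 2 * (n - 1) := by
    rw [H.sum_degrees_eq_twice_card_edges]; omega
  -- every vertex has degree ≥ 1
  have s1 : ∀ x : Fin n, 1 ≤ H.degree x := by
    intro x
    by_contra h0
    have hx0 : ∀ u, ¬ H.Adj x u := by
      intro u hu
      have hmem : u ∈ H.neighborFinset x := by rwa [mem_neighborFinset]
      have := card_pos.mpr ⟨u, hmem⟩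
      rw [← hdeg] at this
      omega
    have key : ∀ z, z ≠ x → n - 3 ≤ H.degree z := by
      intro z hzx
      by_cases hw : ∀ w, w ≠ x → w ≠ z → H.Adj z w
      · have hb := deg_ge_of H z {x, z} (fun u hu => by
          simp only [mem_insert, mem_singleton, not_or] at hu
          exact hw u hu.1 hu.2)
        have hc : ({x, z} : Finset (Fin n)).card ≤ 2 := (card_insert_le _ _).trans (by simp)
        omega
      · push_neg at hw
        obtain ⟨w, hwx, hwz, hwn⟩ := hw
        have hy : ∀ y, y ≠ x → y ≠ z → y ≠ w → H.Adj y z := by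
          intro y hyx hyz hyw
          rcases hcfg x y z w (Ne.symm hyx) (Ne.symm hzx) (Ne.symm hwx) hyz hyw
            (Ne.symm hwz) (fun u _ _ _ => hx0 u) with h | h
          · exact h
          · exact absurd h hwn
        have hb := deg_ge_of H z {x, z, w} (fun u hu => by
          simp only [mem_insert, mem_singleton, not_or] at hu
          exact (hy u hu.1 hu.2.1 hu.2.2).symm)
        have hc : ({x, z, w} : Finset (Fin n)).card ≤ 3 := by
          apply (card_insert_le _ _).trans
          have h2 := card_insert_le z ({w} : Finset (Fin n))
          simp only [card_singleton] at h2
          omega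
        omega
    have hsub : ∑ v ∈ univ.erase x, H.degree v ≤ ∑ v, H.degree v :=
      sum_le_sum_of_subset (subset_univ _)
    have hge := Finset.card_nsmul_le_sum (univ.erase x) (fun v => H.degree v) (n - 3)
      (fun z hz => key z (mem_erase.mp hz).1)
    have hcarde : (univ.erase x).card = n - 1 := by
      rw [card_erase_of_mem (mem_univ _), card_univ, Fintype.card_fin]
    rw [hcarde, smul_eq_mul] at hge
    have h3 : (n - 1) * 3 ≤ (n - 1) * (n - 3) := Nat.mul_le_mul_left _ (by omega)
    omega
  -- degree-1 vertices force a near-dominating neighbor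
  have s2 : ∀ x a : Fin n, H.Adj x a → H.degree x = 1 → n - 2 ≤ H.degree a := by
    intro x a hxa hdx
    have huniq : ∀ u, H.Adj x u → u = a := by
      intro u hu
      by_contra hne
      have hsubs : ({u, a} : Finset (Fin n)) ⊆ H.neighborFinset x := by
        intro v hv
        simp only [mem_insert, mem_singleton] at hv
        rw [mem_neighborFinset]
        rcases hv with rfl | rfl
        · exact hu
        · exact hxa
      have hc := card_le_card hsubs
      rw [card_insert_of_notMem (by simpa using hne), card_singleton, ← hdeg] at hc
      omega
    by_cases hw : ∀ w, w ≠ x → w ≠ a → H.Adj a w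
    · have hb := deg_ge_of H a {x, a} (fun u hu => by
        simp only [mem_insert, mem_singleton, not_or] at hu
        exact hw u hu.1 hu.2)
      have hc : ({x, a} : Finset (Fin n)).card ≤ 2 := (card_insert_le _ _).trans (by simp)
      omega
    · push_neg at hw
      obtain ⟨w, hwx, hwa, hwn⟩ := hw
      have hy : ∀ y, y ≠ x → y ≠ a → y ≠ w → H.Adj a y := by
        intro y hyx hya hyw
        rcases hcfg x y a w (Ne.symm hyx) hxa.ne (Ne.symm hwx) hya hyw (Ne.symm hwa)
          (fun u _ hua _ hadj => hua (huniq u hadj)) with h | h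
        · exact h.symm
        · exact absurd h hwn
      have hb := deg_ge_of H a {a, w} (fun u hu => by
        simp only [mem_insert, mem_singleton, not_or] at hu
        by_cases hux : u = x
        · subst hux; exact hxa.symm
        · exact hy u hux hu.1 hu.2)
      have hc : ({a, w} : Finset (Fin n)).card ≤ 2 := (card_insert_le _ _).trans (by simp)
      omega
  -- find a degree-1 vertex
  have hone : ∃ x, H.degree x = 1 := by
    by_contra hno
    push_neg at hno
    have hge := Finset.card_nsmul_le_sum (univ : Finset (Fin n)) (fun v => H.degree v) 2
      (fun v _ => by have h1 := s1 v; have h2 := hno v; show 2 ≤ H.degree v; omega)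
    rw [card_univ, Fintype.card_fin, smul_eq_mul] at hge
    omega
  obtain ⟨x, hdx⟩ := hone
  obtain ⟨a, ha⟩ : (H.neighborFinset x).Nonempty := by
    apply card_pos.mp
    rw [← hdeg, hdx]
    omega
  rw [mem_neighborFinset] at ha
  have hda : n - 2 ≤ H.degree a := s2 x a ha hdx
  have hsplit : H.degree a + ∑ v ∈ univ.erase a, H.degree v = ∑ v, H.degree v :=
    Finset.add_sum_erase _ (fun v => H.degree v) (mem_univ a)
  -- a is adjacent to everything else
  have hfull : ∀ b, b ≠ a → H.Adj a b := by
    intro b hba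
    by_contra hnab
    have hsubs : H.neighborFinset a ⊆ univ \ {a, b} := by
      intro u hu
      rw [mem_neighborFinset] at hu
      simp only [mem_sdiff, mem_univ, true_and, mem_insert, mem_singleton, not_or]
      exact ⟨fun h => H.irrefl (h ▸ hu), fun h => hnab (h ▸ hu)⟩
    have hcard2 : (univ \ ({a, b} : Finset (Fin n))).card = n - 2 := by
      rw [card_sdiff_of_subset (subset_univ _), card_univ, Fintype.card_fin,
        card_insert_of_notMem (by simpa using hba.symm), card_singleton]
    have heq : H.neighborFinset a = univ \ {a, b} :=
      Finset.eq_of_subset_of_card_le hsubs (by rw [hcard2, ← hdeg]; exact hda)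
    obtain ⟨c, hc⟩ : (H.neighborFinset b).Nonempty := by
      apply card_pos.mp
      rw [← hdeg]
      have := s1 b
      omega
    rw [mem_neighborFinset] at hc
    have hca : c ≠ a := fun h => hnab (by rw [← h]; exact hc.symm)
    have hcb : c ≠ b := hc.ne'
    have hac : H.Adj a c := by
      have : c ∈ H.neighborFinset a := by
        rw [heq]
        simp [hca, hcb]
      rwa [mem_neighborFinset] at this
    have hdc2 : 2 ≤ H.degree c := by
      have hsubs2 : ({a, b} : Finset (Fin n)) ⊆ H.neighborFinset c := by
        intro t ht
        simp only [mem_insert, mem_singleton] at ht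
        rw [mem_neighborFinset]
        rcases ht with rfl | rfl
        · exact hac.symm
        · exact hc.symm
      have := card_le_card hsubs2
      rwa [card_insert_of_notMem (by simpa using hba.symm), card_singleton, ← hdeg] at this
    have hbmem : b ∈ univ.erase a := mem_erase.mpr ⟨hba, mem_univ _⟩
    have hcmem : c ∈ (univ.erase a).erase b := mem_erase.mpr ⟨hcb, mem_erase.mpr ⟨hca, mem_univ _⟩⟩
    have hsplit2 : H.degree b + ∑ v ∈ (univ.erase a).erase b, H.degree v
        = ∑ v ∈ univ.erase a, H.degree v := Finset.add_sum_erase _ (fun v => H.degree v) hbmem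
    have hsplit3 : H.degree c + ∑ v ∈ ((univ.erase a).erase b).erase c, H.degree v
        = ∑ v ∈ (univ.erase a).erase b, H.degree v := Finset.add_sum_erase _ (fun v => H.degree v) hcmem
    have hcard3 : (((univ.erase a).erase b).erase c).card = n - 3 := by
      rw [card_erase_of_mem hcmem, card_erase_of_mem hbmem,
        card_erase_of_mem (mem_univ _), card_univ, Fintype.card_fin]
      omega
    have hlb := Finset.card_nsmul_le_sum (((univ.erase a).erase b).erase c) (fun v => H.degree v) 1
      (fun v _ => s1 v)
    rw [hcard3, smul_eq_mul, mul_one] at hlb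
    by_cases hdb : H.degree b = 1
    · have := s2 b c hc hdb
      omega
    · have := s1 b
      omega
  have hdafull : n - 1 ≤ H.degree a := by
    have := deg_ge_of H a {a} (fun u hu => hfull u (by simpa using hu))
    simpa using this
  have hall1 : ∀ v, v ≠ a → H.degree v = 1 := by
    intro v hva
    by_contra hne
    have h2 : 2 ≤ H.degree v := by have := s1 v; omega
    have hvmem : v ∈ univ.erase a := mem_erase.mpr ⟨hva, mem_univ _⟩
    have hsp : H.degree v + ∑ u ∈ (univ.erase a).erase v, H.degree u
        = ∑ u ∈ univ.erase a, H.degree u := Finset.add_sum_erase _ (fun u => H.degree u) hvmem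
    have hcardev : ((univ.erase a).erase v).card = n - 2 := by
      rw [card_erase_of_mem hvmem, card_erase_of_mem (mem_univ _), card_univ, Fintype.card_fin]
      omega
    have hlb := Finset.card_nsmul_le_sum ((univ.erase a).erase v) (fun u => H.degree u) 1 (fun u _ => s1 u)
    rw [hcardev, smul_eq_mul, mul_one] at hlb
    omega
  refine ⟨a, fun u v => ⟨fun huv => ⟨huv.ne, ?_⟩, fun h => ?_⟩⟩
  · by_contra hor
    push_neg at hor
    obtain ⟨hua, hva⟩ := hor
    have h1 : H.Adj u a := (hfull u hua).symm
    have hsubs : ({v, a} : Finset (Fin n)) ⊆ H.neighborFinset u := by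
      intro t ht
      simp only [mem_insert, mem_singleton] at ht
      rw [mem_neighborFinset]
      rcases ht with rfl | rfl
      · exact huv
      · exact h1
    have hc := card_le_card hsubs
    rw [card_insert_of_notMem (by simpa using hva), card_singleton, ← hdeg] at hc
    have := hall1 u hua
    omega
  · obtain ⟨hne, rfl | rfl⟩ := h
    · exact hfull v (Ne.symm hne)
    · exact (hfull u hne).symm



lemma ev2 (k : ℕ) : 2 * (k * (k + 1) / 2) = k * (k + 1) :=
  Nat.two_mul_div_two_of_even (Nat.even_mul_succ_self k)

lemma arithB (n : ℕ) (hn : 6 ≤ n) : (n - 1) * (n - 2) / 2 + (n - 1) = n.choose 2 := by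
  obtain ⟨m, rfl⟩ : ∃ m, n = m + 2 := ⟨n - 2, by omega⟩
  rw [Nat.choose_two_right]
  have h1 : m + 2 - 1 = m + 1 := by omega
  have h2 : m + 2 - 2 = m := by omega
  rw [h1, h2]
  have e1 := ev2 m
  have e2 := ev2 (m + 1)
  have e3 : (m + 1) * m = m * (m + 1) := by ring
  have e4 : (m + 2) * (m + 1) = (m + 1) * (m + 2) := by ring
  have e5 : (m + 1) * (m + 2) = m * (m + 1) + 2 * (m + 1) := by ring
  omega

lemma star_card {n : ℕ} (hn : 6 ≤ n) (H : SimpleGraph (Fin n)) [DecidableRel H.Adj] (a : Fin n)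
    (h : ∀ u v, H.Adj u v ↔ u ≠ v ∧ (u = a ∨ v = a)) : H.edgeFinset.card = n - 1 := by
  have hdeg : ∀ v, H.degree v = (H.neighborFinset v).card := fun _ => rfl
  have hda : H.degree a = n - 1 := by
    rw [hdeg]
    have he : H.neighborFinset a = univ.erase a := by
      ext u
      rw [mem_neighborFinset, mem_erase, h]
      constructor
      · rintro ⟨hne, _⟩; exact ⟨Ne.symm hne, mem_univ _⟩
      · rintro ⟨hne, _⟩; exact ⟨Ne.symm hne, Or.inl rfl⟩
    rw [he, card_erase_of_mem (mem_univ _), card_univ, Fintype.card_fin]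
  have hdv : ∀ v, v ≠ a → H.degree v = 1 := by
    intro v hva
    rw [hdeg]
    have he : H.neighborFinset v = {a} := by
      ext u
      rw [mem_neighborFinset, mem_singleton, h]
      constructor
      · rintro ⟨hne, h1 | h1⟩
        · exact absurd h1 hva
        · exact h1
      · rintro rfl
        exact ⟨fun hh => hva hh, Or.inr rfl⟩
    rw [he, card_singleton]
  have hh := H.sum_degrees_eq_twice_card_edges
  have hsplit : H.degree a + ∑ v ∈ univ.erase a, H.degree v = ∑ v, H.degree v :=
    Finset.add_sum_erase _ (fun v => H.degree v) (mem_univ a)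
  have hsum1 : ∑ v ∈ univ.erase a, H.degree v = n - 1 := by
    rw [Finset.sum_congr rfl (fun v hv => hdv v (mem_erase.mp hv).1), Finset.sum_const,
      card_erase_of_mem (mem_univ _), card_univ, Fintype.card_fin, smul_eq_mul, mul_one]
  omega

lemma compl_card {n : ℕ} (G : SimpleGraph (Fin n)) [DecidableRel G.Adj]
    [DecidableRel (Gᶜ).Adj] :
    G.edgeFinset.card + (Gᶜ).edgeFinset.card = n.choose 2 := by
  classical
  have hdis : Disjoint G.edgeFinset (Gᶜ).edgeFinset := by
    rw [disjoint_edgeFinset]; exact disjoint_compl_right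
  rw [← card_union_of_disjoint hdis, ← edgeFinset_sup]
  have hsup : G ⊔ Gᶜ = ⊤ := sup_compl_eq_top
  have hcc : (G ⊔ Gᶜ).edgeFinset.card = (⊤ : SimpleGraph (Fin n)).edgeFinset.card := by
    rw [edgeFinset_card, edgeFinset_card]
    exact Fintype.card_congr (Equiv.setCongr (by rw [hsup]))
  rw [hcc, card_edgeFinset_top_eq_card_choose_two, Fintype.card_fin]

lemma nat_card_edge {n : ℕ} (G : SimpleGraph (Fin n)) [Fintype G.edgeSet] :
    Nat.card G.edgeSet = G.edgeFinset.card := by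
  rw [edgeFinset_card]; exact Nat.card_eq_fintype_card

section Main

variable {n : ℕ}

lemma cfg_transfer (G : SimpleGraph (Fin n)) (hcfgG : ¬ Cfg G) :
    ∀ x y z w : Fin n, x ≠ y → x ≠ z → x ≠ w → y ≠ z → y ≠ w → z ≠ w →
      (∀ u, u ≠ x → u ≠ z → u ≠ w → ¬ (Gᶜ).Adj x u) → (Gᶜ).Adj y z ∨ (Gᶜ).Adj z w := by
  intro x y z w h1 h2 h3 h4 h5 h6 hu
  by_contra hcon
  push_neg at hcon
  obtain ⟨hyz, hzw⟩ := hcon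
  have hyz' : G.Adj y z := by
    by_contra h; exact hyz ((G.compl_adj y z).mpr ⟨h4, h⟩)
  have hzw' : G.Adj z w := by
    by_contra h; exact hzw ((G.compl_adj z w).mpr ⟨h6, h⟩)
  have hxu : ∀ u, u ≠ x → u ≠ z → u ≠ w → G.Adj x u := by
    intro u hux huz huw
    by_contra h
    exact hu u hux huz huw ((G.compl_adj x u).mpr ⟨Ne.symm hux, h⟩)
  exact hcfgG ⟨x, y, z, w, h1, h2, h3, h4, h5, h6, hyz', hzw', hxu⟩

theorem stmt12 (n : ℕ) (hn : 6 ≤ n) :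
    exNum n (TnStar n) = (n - 1) * (n - 2) / 2 ∧
      ∀ G : SimpleGraph (Fin n), ¬ ContainsCopy G (TnStar n) →
        Nat.card G.edgeSet = exNum n (TnStar n) →
        Nonempty (G ≃g SimpleGraph.fromRel
          (fun a b : Fin n => a.val < n - 1 ∧ b.val < n - 1)) := by
  classical
  set last : Fin n := ⟨n - 1, by omega⟩ with hlast
  set G0 : SimpleGraph (Fin n) :=
    SimpleGraph.fromRel (fun a b : Fin n => a.val < n - 1 ∧ b.val < n - 1) with hG0
  have hG0adj : ∀ u v : Fin n, G0.Adj u v ↔ u ≠ v ∧ u ≠ last ∧ v ≠ last := by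
    intro u v
    have hu := u.isLt
    have hv := v.isLt
    rw [hG0, fromRel_adj, Ne, Ne, Ne, Fin.ext_iff, Fin.ext_iff, Fin.ext_iff]
    show ¬u.val = v.val ∧ _ ↔ ¬u.val = v.val ∧ ¬u.val = n - 1 ∧ ¬v.val = n - 1
    constructor
    · rintro ⟨h1, h2 | h2⟩ <;> exact ⟨h1, by omega, by omega⟩
    · rintro ⟨h1, h2, h3⟩
      exact ⟨h1, Or.inl ⟨by omega, by omega⟩⟩
  have hG0cadj : ∀ u v : Fin n, (G0ᶜ).Adj u v ↔ u ≠ v ∧ (u = last ∨ v = last) := by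
    intro u v
    rw [compl_adj]
    rw [hG0adj u v]
    constructor
    · rintro ⟨h1, h2⟩
      refine ⟨h1, ?_⟩
      by_contra hor
      push_neg at hor
      exact h2 ⟨h1, hor.1, hor.2⟩
    · rintro ⟨h1, h2⟩
      exact ⟨h1, fun hc => by rcases h2 with rfl | rfl; exacts [hc.2.1 rfl, hc.2.2 rfl]⟩
  have hnotcfg : ¬ Cfg G0 := by
    rintro ⟨x, y, z, w, g01, g02, g03, g12, g13, g23, hyz, hzw, hall⟩
    have hy : y ≠ last := ((hG0adj y z).mp hyz).2.1
    have hz : z ≠ last := ((hG0adj y z).mp hyz).2.2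
    have hw : w ≠ last := ((hG0adj z w).mp hzw).2.2
    by_cases hx : x = last
    · have hadj := hall y (Ne.symm g01) g12 g13
      exact absurd hx ((hG0adj x y).mp hadj).2.1
    · have hadj := hall last (fun h => hx h.symm) (fun h => hz h.symm) (fun h => hw h.symm)
      exact ((hG0adj x last).mp hadj).2.2 rfl
  have hnotcontains : ¬ ContainsCopy G0 (TnStar n) :=
    fun h => hnotcfg ((containsCopy_iff hn G0).mp h)
  have hstarG0 : (G0ᶜ).edgeFinset.card = n - 1 := star_card hn (G0ᶜ) last hG0cadj
  have hcomplG0 := compl_card G0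
  have harith := arithB n hn
  have hG0card : G0.edgeFinset.card = (n - 1) * (n - 2) / 2 := by omega
  have hmem : (n - 1) * (n - 2) / 2 ∈
      {m : ℕ | ∃ G : SimpleGraph (Fin n), ¬ ContainsCopy G (TnStar n) ∧
        Nat.card G.edgeSet = m} := by
    refine ⟨G0, hnotcontains, ?_⟩
    rw [nat_card_edge, hG0card]
  have hub : ∀ m ∈ {m : ℕ | ∃ G : SimpleGraph (Fin n), ¬ ContainsCopy G (TnStar n) ∧
      Nat.card G.edgeSet = m}, m ≤ (n - 1) * (n - 2) / 2 := by
    rintro m ⟨G, hnc, rfl⟩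
    rw [nat_card_edge]
    have hcfg' := cfg_transfer G (fun hc => hnc ((containsCopy_iff hn G).mpr hc))
    have hcompl := compl_card G
    by_cases hEc : (Gᶜ).edgeFinset.card ≤ n - 1
    · obtain ⟨a, ha⟩ := core hn (Gᶜ) hcfg' hEc
      have h1 := star_card hn (Gᶜ) a ha
      omega
    · omega
  have hex : exNum n (TnStar n) = (n - 1) * (n - 2) / 2 := by
    rw [exNum]
    exact le_antisymm (csSup_le ⟨_, hmem⟩ hub) (le_csSup ⟨_, hub⟩ hmem)
  refine ⟨hex, ?_⟩
  intro G hnc hcard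
  rw [hex, nat_card_edge] at hcard
  have hcfg' := cfg_transfer G (fun hc => hnc ((containsCopy_iff hn G).mpr hc))
  have hcompl := compl_card G
  have hEc : (Gᶜ).edgeFinset.card ≤ n - 1 := by omega
  obtain ⟨a, ha⟩ := core hn (Gᶜ) hcfg' hEc
  have hGadj : ∀ u v : Fin n, G.Adj u v ↔ u ≠ v ∧ u ≠ a ∧ v ≠ a := by
    intro u v
    have hcc : (Gᶜᶜ).Adj u v ↔ u ≠ v ∧ ¬ (Gᶜ).Adj u v := (Gᶜ).compl_adj u v
    rw [compl_compl] at hcc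
    rw [hcc, ha u v]
    constructor
    · rintro ⟨h1, h2⟩
      refine ⟨h1, fun hu => h2 ⟨h1, Or.inl hu⟩, fun hv => h2 ⟨h1, Or.inr hv⟩⟩
    · rintro ⟨h1, h2, h3⟩
      exact ⟨h1, fun hc => by rcases hc.2 with rfl | rfl; exacts [h2 rfl, h3 rfl]⟩
  have hswap : ∀ u : Fin n, Equiv.swap a last u = last ↔ u = a := by
    intro u
    constructor
    · intro h
      exact (Equiv.swap a last).injective (h.trans (Equiv.swap_apply_left a last).symm)
    · rintro rfl
      exact Equiv.swap_apply_left _ _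
  refine ⟨⟨Equiv.swap a last, ?_⟩⟩
  intro u v
  show G0.Adj _ _ ↔ G.Adj u v
  rw [hG0adj, hGadj]
  rw [(Equiv.swap a last).injective.ne_iff]
  rw [show (Equiv.swap a last u ≠ last) = (u ≠ a) from by
    rw [Ne, Ne, hswap u]]
  rw [show (Equiv.swap a last v ≠ last) = (v ≠ a) from by
    rw [Ne, Ne, hswap v]]

end Main
end

section
/- For n ≥ 7, ex(2n−6;T_n*) = (n−3)², attained by the complete bipartite graph K_{n−3,n−3}. -/
open SimpleGraph

/-!
Write `k = n - 3`. To embed `T_n^*` it suffices to find a path `c - a - b - e` together with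
`k - 1` further neighbours of `c`. Hence in a `T_n^*`-free graph on `2k` vertices a vertex starting
such a path has degree at most `k + 1`, and if its degree is at least `k + 1` then `b` is again one
of its neighbours. Let `u` be a vertex of maximum degree. If that degree is at most `k`, the degree
sum gives at most `k²` edges. Otherwise every vertex outside the closed neighbourhood `N[u]` is
either a pendant vertex hanging off `N(u)` or has all its neighbours outside `N[u]`; if moreover
`deg u ≥ k + 2`, no path of length three starts at `u`, which caps the degrees inside `N(u)` by
`2 + |V ∖ N[u]|`. In both cases the degree sum is at most `2k²`. Conversely `K_{k,k}` has `k²`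
edges, and it is `T_n^*`-free because the `n - 2` vertices of `T_n^*` other than `v_0` and
`v_{n-2}` would have to lie in one part.
-/

open Finset Fintype

namespace SimpleGraph

variable {V W : Type*}

theorem containsCopy_iff_isContained {G : SimpleGraph V} {H : SimpleGraph W} :
    ContainsCopy G H ↔ H ⊑ G := by
  rw [isContained_iff_exists_le_comap]
  rfl

theorem natCard_edgeSet [Fintype V] (G : SimpleGraph V) [DecidableRel G.Adj] :
    Nat.card G.edgeSet = #G.edgeFinset := by
  rw [Nat.card_eq_fintype_card, card_edgeSet]

theorem exNum_eq_extremalNumber (p : ℕ) (H : SimpleGraph W) :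
    exNum p H = extremalNumber p H := by
  classical
  have hub : extremalNumber p H ∈ upperBounds
      {m | ∃ G : SimpleGraph (Fin p), ¬ContainsCopy G H ∧ Nat.card G.edgeSet = m} := by
    rintro _ ⟨G, hG, rfl⟩
    rw [natCard_edgeSet]
    simpa using card_edgeFinset_le_extremalNumber (containsCopy_iff_isContained.not.mp hG)
  refine le_antisymm (csSup_le' hub) ?_
  conv_lhs => rw [← Fintype.card_fin p]
  rw [extremalNumber_le_iff]
  intro G _ hG
  exact le_csSup ⟨_, hub⟩ ⟨G, containsCopy_iff_isContained.not.mpr hG, natCard_edgeSet G⟩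

theorem natCard_edgeSet_completeBipartiteGraph {α β : Type*} [Finite α] [Finite β] :
    Nat.card (completeBipartiteGraph α β).edgeSet = Nat.card α * Nat.card β := by
  rw [Nat.card_coe_set_eq, Set.ncard_def, encard_edgeSet_completeBipartiteGraph]
  simp [ENat.card_eq_coe_natCard]

theorem card_filter_isLeft_eq {α β : Type*} [Fintype α] [Fintype β] (b : Bool) :
    #{x : α ⊕ β | x.isLeft = b} = if b then card α else card β := by
  rw [Finset.card_filter, Fintype.sum_sum_type]
  cases b <;> simp

theorem tnStar_free_completeBipartiteGraph {α β : Type*} [Fintype α] [Fintype β] {n : ℕ}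
    (hn : 4 ≤ n) (hα : card α + 2 < n) (hβ : card β + 2 < n) :
    (TnStar n).Free (completeBipartiteGraph α β) := by
  rintro ⟨f⟩
  have hside {i j : Fin n} (h : (TnStar n).Adj i j) : (f i).isLeft = !(f j).isLeft := by
    have := f.toHom.map_adj h
    revert this
    cases f i <;> cases f j <;> simp
  have hadj {i j : Fin n} (h : i.val = 0 ∧ 1 ≤ j.val ∧ j.val ≤ n - 3 ∨
      i.val = n - 3 ∧ j.val = n - 2 ∨ i.val = n - 2 ∧ j.val = n - 1) : (TnStar n).Adj i j := by
    simp only [TnStar, fromRel_adj]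
    omega
  set v₀ : Fin n := ⟨0, by omega⟩
  set S : Finset (Fin n) := {v₀, ⟨n - 2, by omega⟩}ᶜ
  have hS : #S = n - 2 := by
    rw [card_compl, card_pair (by simp [v₀, Fin.ext_iff]; omega), Fintype.card_fin]
  have hmaps : ∀ i ∈ S, f i ∈ ({x | x.isLeft = !(f v₀).isLeft} : Finset (α ⊕ β)) := by
    intro i hi
    simp only [S, mem_compl, mem_insert, mem_singleton, Fin.ext_iff, v₀] at hi
    simp only [mem_filter, mem_univ, true_and]
    by_cases hi' : i.val ≤ n - 3
    · rw [hside (hadj (i := v₀) (j := i) (.inl ⟨rfl, by omega, hi'⟩)), Bool.not_not]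
    · have h₁ := hside (hadj (i := v₀) (j := ⟨n - 3, by omega⟩) (.inl ⟨rfl, by simp; omega, le_rfl⟩))
      have h₂ := hside (hadj (i := ⟨n - 3, by omega⟩) (j := ⟨n - 2, by omega⟩) (.inr (.inl ⟨rfl, rfl⟩)))
      have h₃ := hside (hadj (i := ⟨n - 2, by omega⟩) (j := i) (.inr (.inr ⟨rfl, by omega⟩)))
      rw [h₁, h₂, h₃]
      simp
  have := card_le_card_of_injOn f hmaps f.injective.injOn
  rw [hS, card_filter_isLeft_eq] at this
  split_ifs at this <;> omega

def IsPath3 (G : SimpleGraph V) (c a b e : V) : Prop :=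
  G.Adj c a ∧ G.Adj a b ∧ G.Adj b e ∧ c ≠ b ∧ c ≠ e ∧ a ≠ e

section UpperBound

variable [Fintype V] {G : SimpleGraph V} [DecidableRel G.Adj] {k : ℕ} {u a b e y : V}

theorem degree_le_one_of_adj_of_not_adj (hu : ∀ a b e, G.IsPath3 u a b e → G.Adj u b)
    (hyu : y ≠ u) (huy : ¬G.Adj u y) (hua : G.Adj u a) (hay : G.Adj a y) : G.degree y ≤ 1 := by
  rw [← card_neighborFinset_eq_degree, ← card_singleton a]
  refine card_le_card fun t ht => mem_singleton.mpr (by_contra fun hta => ?_)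
  rw [mem_neighborFinset] at ht
  obtain rfl | htu := eq_or_ne t u
  · exact huy ht.symm
  · exact huy (hu a y t ⟨hua, hay, ht, hyu.symm, htu.symm, Ne.symm hta⟩)

variable [DecidableEq V]

theorem tnStar_isContained_of_isPath3 {n : ℕ} (hn : 4 ≤ n) {c : V} (h : G.IsPath3 c a b e)
    (hc : n - 4 ≤ #(G.neighborFinset c \ {a, b, e})) : TnStar n ⊑ G := by
  obtain ⟨hca, hab, hbe, hcb, hce, hae⟩ := h
  obtain ⟨m, rfl⟩ := Nat.exists_eq_add_of_le' hn
  obtain ⟨T, hT, hTcard⟩ := exists_subset_card_eq (s := G.neighborFinset c \ {a, b, e})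
    (by simpa using hc)
  have hTc : ∀ x ∈ T, G.Adj c x := fun x hx => by simpa using (mem_sdiff.mp (hT hx)).1
  have hTabe : ∀ x ∈ T, x ≠ a ∧ x ≠ b ∧ x ≠ e := fun x hx => by
    simpa using (mem_sdiff.mp (hT hx)).2
  set L := c :: (T.toList ++ [a, b, e])
  have hlen : L.length = m + 4 := by simp [L, hTcard]
  have hL : L.Nodup := by
    have hcT : c ∉ T := fun hc => G.irrefl (hTc c hc)
    simpa [L, List.nodup_append, hcT, hca.ne, hcb, hce, hab.ne, hae, hbe.ne, T.nodup_toList]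
      using hTabe
  refine isContained_iff_exists_le_comap.mpr
    ⟨⟨fun i => L[i.1], fun i j hij => Fin.ext (hL.getElem_inj_iff.mp hij)⟩, ?_⟩
  have hstep : ∀ i j : Fin (m + 4), (i.val = 0 ∧ 1 ≤ j.val ∧ j.val ≤ m + 4 - 3 ∨
      i.val = m + 4 - 3 ∧ j.val = m + 4 - 2 ∨ i.val = m + 4 - 2 ∧ j.val = m + 4 - 1) →
      G.Adj L[i.1] L[j.1] := by
    rintro ⟨i, hi⟩ ⟨j, hj⟩ (⟨rfl, hj1, hj2⟩ | ⟨rfl, rfl⟩ | ⟨rfl, rfl⟩)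
    · obtain ⟨j, rfl⟩ := Nat.exists_eq_add_of_le' hj1
      simp only [L, List.getElem_cons_zero, List.getElem_cons_succ, List.getElem_append]
      split_ifs with hjT
      · exact hTc _ (mem_toList.mp (List.getElem_mem _))
      · obtain rfl : j = m := by simp only [length_toList] at hjT hj2; omega
        simpa [hTcard] using hca
    · simpa [L, hTcard] using hab
    · simpa [L, hTcard] using hbe
  intro i j hij
  rw [TnStar, fromRel_adj] at hij
  obtain ⟨-, h | h⟩ := hij
  · exact hstep i j h
  · exact (hstep j i h).symm

theorem degree_le_of_isPath3
    (hG : ∀ c a b e, G.IsPath3 c a b e → #(G.neighborFinset c \ {a, b, e}) + 2 ≤ k)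
    (h : G.IsPath3 u a b e) : G.degree u ≤ k + 1 := by
  have := hG u a b e h
  have := card_le_card_sdiff_add_card (s := G.neighborFinset u) (t := {a, b, e})
  have := card_le_three (a := a) (b := b) (c := e)
  rw [← card_neighborFinset_eq_degree]
  omega

theorem adj_of_isPath3
    (hG : ∀ c a b e, G.IsPath3 c a b e → #(G.neighborFinset c \ {a, b, e}) + 2 ≤ k)
    (hu : k + 1 ≤ G.degree u) (h : G.IsPath3 u a b e) : G.Adj u b := by
  by_contra hub
  have hsub : G.neighborFinset u ∩ {a, b, e} ⊆ {a, e} := by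
    intro x
    simp only [mem_inter, mem_neighborFinset, mem_insert, mem_singleton]
    rintro ⟨hx, rfl | rfl | rfl⟩ <;> simp_all
  have hbound := hG u a b e h
  have hsplit := card_sdiff_add_card_inter (G.neighborFinset u) {a, b, e}
  have hinter := (card_le_card hsub).trans (card_le_two (a := a) (b := e))
  rw [card_neighborFinset_eq_degree] at hsplit
  omega

theorem card_compl_insert_neighborFinset (u : V) :
    #(insert u (G.neighborFinset u))ᶜ = card V - (G.degree u + 1) := by
  rw [card_compl, card_insert_of_notMem (notMem_neighborFinset_self G u),
    card_neighborFinset_eq_degree]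

theorem degree_le_of_mem_compl (hu : ∀ a b e, G.IsPath3 u a b e → G.Adj u b)
    (hy : y ∈ (insert u (G.neighborFinset u))ᶜ) :
    G.degree y ≤ max 1 (#(insert u (G.neighborFinset u))ᶜ - 1) := by
  simp only [mem_compl, mem_insert, mem_neighborFinset, not_or] at hy
  obtain ⟨hyu, huy⟩ := hy
  by_cases hA : ∃ a, G.Adj u a ∧ G.Adj a y
  · obtain ⟨a, hua, hay⟩ := hA
    exact le_max_of_le_left (degree_le_one_of_adj_of_not_adj hu hyu huy hua hay)
  · refine le_max_of_le_right ?_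
    rw [← card_neighborFinset_eq_degree, ← card_erase_of_mem (s := (insert u _)ᶜ)
      (by simpa using ⟨hyu, huy⟩)]
    refine card_le_card fun t ht => ?_
    rw [mem_neighborFinset] at ht
    simp only [mem_erase, mem_compl, mem_insert, mem_neighborFinset, not_or]
    exact ⟨ht.ne.symm, fun htu => huy (htu ▸ ht.symm), fun hut => hA ⟨t, hut, ht.symm⟩⟩

theorem degree_le_of_adj_of_forall_not_isPath3 (hu : ∀ a b e, ¬G.IsPath3 u a b e)
    (hua : G.Adj u a) : G.degree a ≤ #(insert u (G.neighborFinset u))ᶜ + 2 := by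
  have hinter : #(G.neighborFinset a ∩ G.neighborFinset u) ≤ 1 := by
    refine card_le_one.mpr fun b hb b' hb' => by_contra fun hbb' => ?_
    simp only [mem_inter, mem_neighborFinset] at hb hb'
    exact hu b a b' ⟨hb.2, hb.1.symm, hb'.1, hua.ne, hb'.2.ne, hbb'⟩
  have hsdiff : G.neighborFinset a \ G.neighborFinset u ⊆
      insert u (insert u (G.neighborFinset u))ᶜ := by
    intro t
    simp only [mem_sdiff, mem_neighborFinset, mem_insert, mem_compl, not_or]
    tauto
  have := card_sdiff_add_card_inter (G.neighborFinset a) (G.neighborFinset u)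
  have := (card_le_card hsdiff).trans (card_insert_le _ _)
  rw [card_neighborFinset_eq_degree] at *
  omega

theorem two_mul_card_edgeFinset_le (hu : ∀ a b e, G.IsPath3 u a b e → G.Adj u b) {D : ℕ}
    (hD : ∀ a, G.Adj u a → G.degree a ≤ D) :
    2 * #G.edgeFinset ≤ G.degree u + G.degree u * D +
      #(insert u (G.neighborFinset u))ᶜ * max 1 (#(insert u (G.neighborFinset u))ᶜ - 1) := by
  have hA : ∑ a ∈ G.neighborFinset u, G.degree a ≤ G.degree u * D := by
    simpa using sum_le_card_nsmul _ _ _ fun a ha => hD a ((mem_neighborFinset ..).mp ha)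
  have hB := sum_le_card_nsmul _ _ _ fun y hy => degree_le_of_mem_compl hu hy
  rw [← sum_degrees_eq_twice_card_edges, ← sum_add_sum_compl (insert u (G.neighborFinset u)),
    sum_insert (notMem_neighborFinset_self G u)]
  simp only [smul_eq_mul] at hB
  omega

theorem card_edgeFinset_le_sq_of_degree_eq
    (hG : ∀ c a b e, G.IsPath3 c a b e → #(G.neighborFinset c \ {a, b, e}) + 2 ≤ k)
    (hk : 4 ≤ k) (hV : card V = 2 * k) (hu : G.maxDegree = G.degree u)
    (hdeg : G.degree u = k + 1) : #G.edgeFinset ≤ k ^ 2 := by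
  have h := two_mul_card_edgeFinset_le (fun a b e => adj_of_isPath3 hG hdeg.ge)
    (D := k + 1) fun a _ => hdeg ▸ hu ▸ G.degree_le_maxDegree a
  rw [card_compl_insert_neighborFinset, hV, hdeg] at h
  obtain ⟨j, rfl⟩ := Nat.exists_eq_add_of_le' hk
  rw [show 2 * (j + 4) - (j + 4 + 1 + 1) = j + 2 by omega, show j + 2 - 1 = j + 1 by omega,
    max_eq_right (by omega)] at h
  nlinarith

theorem card_edgeFinset_le_sq_of_degree_gt
    (hG : ∀ c a b e, G.IsPath3 c a b e → #(G.neighborFinset c \ {a, b, e}) + 2 ≤ k)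
    (hV : card V = 2 * k) (hdeg : k + 1 < G.degree u) : #G.edgeFinset ≤ k ^ 2 := by
  have hno (a b e : V) (h : G.IsPath3 u a b e) : False :=
    (degree_le_of_isPath3 hG h).not_gt hdeg
  have h := two_mul_card_edgeFinset_le (fun a b e => adj_of_isPath3 hG hdeg.le) fun a ha =>
    degree_le_of_adj_of_forall_not_isPath3 hno ha
  have hlt := G.degree_lt_card_verts u
  rw [card_compl_insert_neighborFinset, hV] at h
  set m := 2 * k - (G.degree u + 1)
  have hm : m * max 1 (m - 1) ≤ m * m := by
    rcases Nat.eq_zero_or_pos m with h0 | hpos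
    · simp [h0]
    · exact Nat.mul_le_mul_left m (max_le hpos (Nat.sub_le m 1))
  have hdm : G.degree u + m + 1 = 2 * k := by omega
  have hmk : (m + 3) * k ≤ k * k := Nat.mul_le_mul_right k (by omega)
  nlinarith [congrArg (· * (m + 3)) hdm]

theorem card_edgeFinset_le_sq (hk : 4 ≤ k) (hV : card V = 2 * k)
    (hG : (TnStar (k + 3)).Free G) : #G.edgeFinset ≤ k ^ 2 := by
  have hpath (c a b e : V) (h : G.IsPath3 c a b e) :
      #(G.neighborFinset c \ {a, b, e}) + 2 ≤ k := by
    by_contra! hlt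
    exact hG (tnStar_isContained_of_isPath3 (by omega) h (by omega))
  have : Nonempty V := card_pos_iff.mp (by omega)
  obtain ⟨u, hu⟩ := G.exists_maximal_degree_vertex
  rcases lt_trichotomy (G.degree u) (k + 1) with hlt | heq | hgt
  · have := sum_le_card_nsmul univ _ k fun v _ =>
      hu ▸ G.degree_le_maxDegree v |>.trans (by omega)
    rw [sum_degrees_eq_twice_card_edges, card_univ, hV, smul_eq_mul] at this
    nlinarith
  · exact card_edgeFinset_le_sq_of_degree_eq hpath hk hV hu heq
  · exact card_edgeFinset_le_sq_of_degree_gt hpath hV hgt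

end UpperBound

end SimpleGraph

theorem stmt13 (n : ℕ) (hn : 7 ≤ n) :
    exNum (2 * n - 6) (TnStar n) = (n - 3) ^ 2 ∧
      ¬ ContainsCopy (completeBipartiteGraph (Fin (n - 3)) (Fin (n - 3))) (TnStar n) ∧
      Nat.card (completeBipartiteGraph (Fin (n - 3)) (Fin (n - 3))).edgeSet = (n - 3) ^ 2 := by
  classical
  have hfree : (TnStar n).Free (completeBipartiteGraph (Fin (n - 3)) (Fin (n - 3))) :=
    tnStar_free_completeBipartiteGraph (by omega) (by simp; omega) (by simp; omega)
  have hcard : Nat.card (completeBipartiteGraph (Fin (n - 3)) (Fin (n - 3))).edgeSet =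
      (n - 3) ^ 2 := by
    rw [natCard_edgeSet_completeBipartiteGraph, Nat.card_fin, sq]
  refine ⟨?_, containsCopy_iff_isContained.not.mpr hfree, hcard⟩
  rw [exNum_eq_extremalNumber]
  apply le_antisymm
  · conv_lhs => rw [← Fintype.card_fin (2 * n - 6)]
    rw [extremalNumber_le_iff]
    intro G _ hG
    obtain ⟨k, rfl⟩ := Nat.exists_eq_add_of_le' (show 3 ≤ n by omega)
    simpa using card_edgeFinset_le_sq (by omega) (by simp; omega) hG
  · have := card_edgeFinset_le_extremalNumber hfree
    rw [← natCard_edgeSet, hcard] at this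
    simpa [show n - 3 + (n - 3) = 2 * n - 6 by omega] using this
end
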